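/- arXiv:1409.5116 — 3 statements merged into one kernel-verified Lean document; each statement's English description precedes it below -/
import Mathlib

section
/- Let R be a tight collapsible subset of a 4-critical graph G and let S be the boundary of R. If |S| ≥ 3, then every vertex of S has degree at least four in G. If |S| = 2, then at least one vertex of S has degree at least four in G. -/
open SimpleGraph

/-- The degree of a vertex, as the cardinality of its neighbor set. -/
noncomputable def deg {V : Type} (G : SimpleGraph V) (v : V) : ℕ :=
  Nat.card (G.neighborSet v)

/-- The number of edges of a graph. -/
noncomputable def numEdges {V : Type} (G : SimpleGraph V) : ℕ :=
  Nat.card G.edgeSet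

/-- The independence number of a graph. -/
noncomputable def indepNum {V : Type} (G : SimpleGraph V) : ℕ :=
  sSup {n | ∃ s : Set V, (∀ u ∈ s, ∀ v ∈ s, ¬ G.Adj u v) ∧ s.ncard = n}

/-- The set of vertices of degree at most three. -/
noncomputable def D3set {V : Type} (G : SimpleGraph V) : Set V :=
  {v | deg G v ≤ 3}

/-- `D3(G)`: the subgraph induced by the vertices of degree at most three. -/
noncomputable def D3 {V : Type} (G : SimpleGraph V) : SimpleGraph (D3set G) :=
  G.induce (D3set G)

/-- The potential of a graph: `p(G) = 4.8 |V(G)| - 3 |E(G)| + 0.6 α(D3(G))`. -/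
noncomputable def potential {V : Type} (G : SimpleGraph V) : ℚ :=
  (24/5 : ℚ) * Nat.card V - 3 * numEdges G + (3/5 : ℚ) * _root_.indepNum (D3 G)

/-- The potential of a subset `R` of the vertices of `G`:
`p(R) = 4.8 |R| - 3 |E(G[R])| + 0.6 α(G[D3(G) ∩ R])`. -/
noncomputable def potentialOf {V : Type} (G : SimpleGraph V) (R : Set V) : ℚ :=
  (24/5 : ℚ) * R.ncard - 3 * numEdges (G.induce R)
    + (3/5 : ℚ) * _root_.indepNum (G.induce (D3set G ∩ R))

/-- A graph is `k`-critical if it is not `(k-1)`-colorable but every proper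
subgraph is `(k-1)`-colorable. -/
def IsKCritical {V : Type} (G : SimpleGraph V) (k : ℕ) : Prop :=
  ¬ G.Colorable (k - 1) ∧ ∀ H : SimpleGraph V, H ≤ G → H ≠ G → H.Colorable (k - 1)

/-- A graph has Ore-degree at most `d` if `d(u) + d(v) ≤ d` for every edge `uv`. -/
def OreDegreeAtMost {V : Type} (G : SimpleGraph V) (d : ℕ) : Prop :=
  ∀ u v, G.Adj u v → deg G u + deg G v ≤ d

/-- The Ore-composition of `G1` (edge-side, with replaced edge `xy`) and `G2`
(split-side, with split vertex `z` whose incident edges going to `A` are attached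
to `x` and the remaining ones to `y`). -/
def oreCompose {V1 V2 : Type} (G1 : SimpleGraph V1) (G2 : SimpleGraph V2)
    (x y : V1) (z : V2) (A : Set V2) :
    SimpleGraph (V1 ⊕ {v : V2 // v ≠ z}) :=
  SimpleGraph.fromRel (fun a b =>
    match a, b with
    | Sum.inl u, Sum.inl v =>
        G1.Adj u v ∧ ¬((u = x ∧ v = y) ∨ (u = y ∧ v = x))
    | Sum.inl u, Sum.inr v =>
        (u = x ∧ G2.Adj z v.1 ∧ v.1 ∈ A) ∨ (u = y ∧ G2.Adj z v.1 ∧ v.1 ∉ A)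
    | Sum.inr _, Sum.inl _ => False
    | Sum.inr u, Sum.inr v => G2.Adj u.1 v.1)

/-- `G` is an Ore-composition of `G1` and `G2`: there are a replaced edge `xy` of
`G1`, a split vertex `z` of `G2`, and a splitting of the edges at `z` into two
nonempty parts, such that `G` is isomorphic to the resulting composition. -/
def IsOreComposition {V V1 V2 : Type} (G : SimpleGraph V)
    (G1 : SimpleGraph V1) (G2 : SimpleGraph V2) : Prop :=
  ∃ (x y : V1) (z : V2) (A : Set V2),
    G1.Adj x y ∧ (∃ p, G2.Adj z p ∧ p ∈ A) ∧ (∃ q, G2.Adj z q ∧ q ∉ A) ∧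
    Nonempty (G ≃g oreCompose G1 G2 x y z A)

/-- The family of `4`-Ore graphs: the smallest family of graphs containing `K4`
and closed under Ore-compositions. -/
inductive IsFourOre : ∀ {V : Type}, SimpleGraph V → Prop
  | k4 {V : Type} (G : SimpleGraph V) :
      Nonempty (G ≃g completeGraph (Fin 4)) → IsFourOre G
  | comp {V V1 V2 : Type} (G : SimpleGraph V)
      (G1 : SimpleGraph V1) (G2 : SimpleGraph V2) :
      IsFourOre G1 → IsFourOre G2 → IsOreComposition G G1 G2 → IsFourOre G

/-- The boundary of a set `R`: the vertices of `R` with a neighbor outside `R`. -/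
def boundary {V : Type} (G : SimpleGraph V) (R : Set V) : Set V :=
  {v | v ∈ R ∧ ∃ u, u ∉ R ∧ G.Adj v u}

/-- A proper subset `R` of the vertices with `|R| ≥ 2` is collapsible if in every
proper 3-coloring of `G[R]` all vertices of the boundary of `R` get the same color. -/
def Collapsible {V : Type} (G : SimpleGraph V) (R : Set V) : Prop :=
  R ≠ Set.univ ∧ 2 ≤ R.ncard ∧
  ∀ φ : V → Fin 3, (∀ u ∈ R, ∀ v ∈ R, G.Adj u v → φ u ≠ φ v) →
    ∀ u ∈ boundary G R, ∀ v ∈ boundary G R, φ u = φ v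

/-- The critical complement of a set `R`: identify the boundary of `R` to a single
vertex (the vertex `none`) and delete the rest of `R`. -/
def criticalComplement {V : Type} (G : SimpleGraph V) (R : Set V) :
    SimpleGraph (Option {v : V // v ∉ R}) :=
  SimpleGraph.fromRel (fun a b =>
    match a, b with
    | some u, some v => G.Adj u.1 v.1
    | some u, none => ∃ w ∈ boundary G R, G.Adj u.1 w
    | none, some _ => False
    | none, none => False)

/-- A nonempty proper subset `R` with boundary `S` is cocollapsible if every vertex
of `S` has exactly one neighbor outside `R`, and for every non-constant list of
forbidden colors on `S` there is a proper 3-coloring of `G[R]` avoiding them. -/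
def Cocollapsible {V : Type} (G : SimpleGraph V) (R : Set V) : Prop :=
  R.Nonempty ∧ R ≠ Set.univ ∧
  (∀ v ∈ boundary G R, ∃! u, u ∉ R ∧ G.Adj v u) ∧
  ∀ f : V → Fin 3,
    (∃ u ∈ boundary G R, ∃ v ∈ boundary G R, f u ≠ f v) →
    ∃ φ : V → Fin 3, (∀ u ∈ R, ∀ v ∈ R, G.Adj u v → φ u ≠ φ v) ∧
      ∀ v ∈ boundary G R, φ v ≠ f v

/-- A cocollapsible set is nontrivial if its complement has more than one vertex. -/
def NontrivialCocollapsible {V : Type} (G : SimpleGraph V) (R : Set V) : Prop :=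
  Cocollapsible G R ∧ 1 < (Rᶜ : Set V).ncard

/-- The graph `H` together with the (possibly new) edge `uv`. -/
def withEdge {W : Type} (H : SimpleGraph W) (u v : W) : SimpleGraph W :=
  H ⊔ SimpleGraph.fromEdgeSet {s(u, v)}

/-- A collapsible set `R` is tight if for any two distinct boundary vertices `u, v`
the graph `G[R] + uv` is `4`-critical. -/
def TightCollapsible {V : Type} (G : SimpleGraph V) (R : Set V) : Prop :=
  Collapsible G R ∧
  ∀ u (hu : u ∈ boundary G R) v (hv : v ∈ boundary G R), u ≠ v →
    IsKCritical (withEdge (G.induce R) ⟨u, hu.1⟩ ⟨v, hv.1⟩) 4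

/-- `s(H) = |E(H)| - |V(H)| + α(H)`. -/
noncomputable def sVal {V : Type} (H : SimpleGraph V) : ℤ :=
  (numEdges H : ℤ) - (Nat.card V : ℤ) + (_root_.indepNum H : ℤ)

/-- `H7`: the unique Ore-composition of two copies of `K4`. Vertices `0,1,2,3`
form the edge-side `K4` with replaced edge `01`; the split vertex of the second
`K4` on `{z,4,5,6}` is split so that `0` gets the edge to `4` and `1` gets the
edges to `5` and `6`. -/
def H7 : SimpleGraph (Fin 7) :=
  SimpleGraph.fromRel (fun a b =>
    ((a, b) : Fin 7 × Fin 7) ∈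
      ([(0, 2), (0, 3), (1, 2), (1, 3), (2, 3), (4, 5), (4, 6), (5, 6),
        (0, 4), (1, 5), (1, 6)] : List (Fin 7 × Fin 7)))

/-- A diamond in `G`: a subgraph isomorphic to `K4` minus an edge whose two
vertices of degree three within the subgraph (`w1` and `w2`) also have degree
three in `G`.  The vertices `e1` and `e2` are the ends of the diamond. -/
def IsDiamond {V : Type} (G : SimpleGraph V) (e1 e2 w1 w2 : V) : Prop :=
  e1 ≠ e2 ∧ e1 ≠ w1 ∧ e1 ≠ w2 ∧ e2 ≠ w1 ∧ e2 ≠ w2 ∧ w1 ≠ w2 ∧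
  G.Adj w1 w2 ∧ G.Adj e1 w1 ∧ G.Adj e1 w2 ∧ G.Adj e2 w1 ∧ G.Adj e2 w2 ∧
  deg G w1 = 3 ∧ deg G w2 = 3

/-- A triangle with a pendant edge. -/
def trianglePendant1 : SimpleGraph (Fin 4) :=
  SimpleGraph.fromRel (fun a b =>
    ((a, b) : Fin 4 × Fin 4) ∈ ([(0, 1), (1, 2), (2, 0), (0, 3)] : List (Fin 4 × Fin 4)))

/-- A triangle with a pendant path on two further vertices. -/
def trianglePendant2 : SimpleGraph (Fin 5) :=
  SimpleGraph.fromRel (fun a b =>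
    ((a, b) : Fin 5 × Fin 5) ∈
      ([(0, 1), (1, 2), (2, 0), (0, 3), (3, 4)] : List (Fin 5 × Fin 5)))

/-!
In a `(k+1)`-critical graph every non-isolated vertex has degree at least `k`: otherwise a
`k`-coloring of the graph with the edges at that vertex removed extends to it. Applied to the
4-critical graphs `G[R] + uw`, this gives every boundary vertex at least two neighbours in `R`, and
at least three if it is neither `u` nor `w`; as it also has a neighbour outside `R`, three boundary
vertices force degree four. If the boundary is `{u, v}` and both have degree three, each has a
single neighbour `x`, resp. `y`, outside `R`. A 3-coloring of `G - ux` gives `u` and `v` the same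
colour by collapsibility, and swapping that colour inside `R` with one avoiding the colours of
`x` and `y` yields a 3-coloring of `G`.
-/

section WithEdge

variable {W : Type} (H : SimpleGraph W) {u w : W}

theorem withEdge_adj {x y : W} :
    (withEdge H u w).Adj x y ↔ H.Adj x y ∨ (s(x, y) = s(u, w) ∧ x ≠ y) := by
  simp [withEdge]

theorem neighborSet_withEdge_of_ne {a : W} (hau : a ≠ u) (haw : a ≠ w) :
    (withEdge H u w).neighborSet a = H.neighborSet a := by
  ext b
  simp only [mem_neighborSet, withEdge_adj, Sym2.eq_iff]
  grind

theorem neighborSet_withEdge_left (huw : u ≠ w) :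
    (withEdge H u w).neighborSet u = insert w (H.neighborSet u) := by
  ext b
  simp only [mem_neighborSet, withEdge_adj, Sym2.eq_iff, Set.mem_insert_iff]
  grind

end WithEdge

theorem ncard_neighborSet_induce {V : Type} (G : SimpleGraph V) (R : Set V) {a : V}
    (ha : a ∈ R) :
    ((G.induce R).neighborSet ⟨a, ha⟩).ncard = (G.neighborSet a ∩ R).ncard := by
  rw [neighborSet_induce, ← Set.ncard_image_of_injective _ Subtype.val_injective,
    Subtype.image_preimage_coe, Set.inter_comm]

theorem IsKCritical.le_ncard_neighborSet {W : Type} [Finite W] {H : SimpleGraph W} {k : ℕ}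
    (hH : IsKCritical H (k + 1)) {v : W} (hv : (H.neighborSet v).Nonempty) :
    k ≤ (H.neighborSet v).ncard := by
  classical
  by_contra! hlt
  obtain ⟨x, hx⟩ := hv
  have hproper : H.deleteIncidenceSet v ≠ H := fun h =>
    (deleteIncidenceSet_adj.mp (h.symm ▸ hx : (H.deleteIncidenceSet v).Adj v x)).2.1 rfl
  obtain ⟨C⟩ : (H.deleteIncidenceSet v).Colorable k :=
    hH.2 _ (deleteIncidenceSet_le H v) hproper
  obtain ⟨c, hc⟩ : ∃ c, c ∉ C '' H.neighborSet v := by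
    rw [← Set.ne_univ_iff_exists_notMem]
    intro h
    have := Set.ncard_image_le (f := C) (Set.toFinite (H.neighborSet v))
    rw [h, Set.ncard_univ, Nat.card_eq_fintype_card, Fintype.card_fin] at this
    omega
  refine hH.1 ⟨Coloring.mk (Function.update C v c) fun {a b} hab => ?_⟩
  by_cases ha : a = v
  · subst ha
    rw [Function.update_self, Function.update_of_ne hab.ne.symm]
    exact fun hcb => hc ⟨b, hab, hcb.symm⟩
  by_cases hb : b = v
  · subst hb
    rw [Function.update_self, Function.update_of_ne hab.ne]
    exact fun hca => hc ⟨a, hab.symm, hca⟩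
  rw [Function.update_of_ne ha, Function.update_of_ne hb]
  exact C.valid (deleteIncidenceSet_adj.mpr ⟨hab, ha, hb⟩)

section Boundary

variable {V : Type} {G : SimpleGraph V} {R : Set V}

theorem deg_eq_ncard_inter_add_ncard_diff [Finite V] (a : V) :
    deg G a = (G.neighborSet a ∩ R).ncard + (G.neighborSet a \ R).ncard := by
  rw [deg, Nat.card_coe_set_eq, Set.ncard_inter_add_ncard_sdiff_eq_ncard]

theorem nonempty_neighborSet_diff_of_mem_boundary {a : V} (ha : a ∈ boundary G R) :
    (G.neighborSet a \ R).Nonempty :=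
  let ⟨b, hbR, hab⟩ := ha.2
  ⟨b, hab, hbR⟩

theorem ncard_neighborSet_inter_lt_deg_of_mem_boundary [Finite V] {a : V}
    (ha : a ∈ boundary G R) :
    (G.neighborSet a ∩ R).ncard < deg G a := by
  have := (Set.ncard_pos).mpr (nonempty_neighborSet_diff_of_mem_boundary ha)
  rw [deg_eq_ncard_inter_add_ncard_diff (R := R)]
  omega

theorem Collapsible.colorable_of_crossing_edges (hG : IsKCritical G 4) (hR : Collapsible G R)
    {u v x y : V} (hu : u ∈ boundary G R) (hv : v ∈ boundary G R) (hx : x ∉ R)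
    (hux : G.Adj u x)
    (hcross : ∀ a ∈ R, ∀ b ∉ R, G.Adj a b → (a = u ∧ b = x) ∨ (a = v ∧ b = y)) :
    G.Colorable 3 := by
  classical
  have hproper : G.deleteEdges {s(u, x)} ≠ G := fun h =>
    (deleteEdges_adj.mp (h.symm ▸ hux : (G.deleteEdges {s(u, x)}).Adj u x)).2 rfl
  obtain ⟨C⟩ := hG.2 _ (deleteEdges_le _) hproper
  have hC : ∀ {a b}, G.Adj a b → (a ∈ R ↔ b ∈ R) → C a ≠ C b := fun hab hiff =>
    C.valid (deleteEdges_adj.mpr ⟨hab, by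
      rw [Set.mem_singleton_iff, Sym2.eq_iff]
      rintro (⟨rfl, rfl⟩ | ⟨rfl, rfl⟩)
      · exact hx (hiff.mp hu.1)
      · exact hx (hiff.mpr hu.1)⟩)
  have hCuv : C u = C v :=
    hR.2.2 C (fun a ha b hb hab => hC hab (iff_of_true ha hb)) u hu v hv
  obtain ⟨c, hcx, hcy⟩ := (by decide : ∀ p q : Fin 3, ∃ c, c ≠ p ∧ c ≠ q) (C x) (C y)
  set σ := Equiv.swap (C u) c
  have hσ : ∀ a ∈ R, ∀ b ∉ R, G.Adj a b → σ (C a) ≠ C b := by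
    intro a ha b hb hab
    rcases hcross a ha b hb hab with ⟨rfl, rfl⟩ | ⟨rfl, rfl⟩
    · rwa [Equiv.swap_apply_left]
    · rwa [← hCuv, Equiv.swap_apply_left]
  refine ⟨Coloring.mk (fun a => if a ∈ R then σ (C a) else C a) fun {a b} hab => ?_⟩
  by_cases ha : a ∈ R <;> by_cases hb : b ∈ R <;> simp only [ha, hb, if_true, if_false]
  · exact σ.injective.ne (hC hab (iff_of_true ha hb))
  · exact hσ a ha b hb hab
  · exact (hσ b hb a ha hab.symm).symm
  · exact hC hab (iff_of_false ha hb)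

variable [Finite V]

theorem TightCollapsible.two_le_ncard_neighborSet_inter (hR : TightCollapsible G R) {a b : V}
    (ha : a ∈ boundary G R) (hb : b ∈ boundary G R) (hab : a ≠ b) :
    2 ≤ (G.neighborSet a ∩ R).ncard := by
  have hab' : (⟨a, ha.1⟩ : R) ≠ ⟨b, hb.1⟩ := fun h => hab (congrArg Subtype.val h)
  have h3 := (hR.2 a ha b hb hab).le_ncard_neighborSet (k := 3) (v := ⟨a, ha.1⟩)
  rw [neighborSet_withEdge_left _ hab'] at h3
  have := (h3 (Set.insert_nonempty _ _)).trans (Set.ncard_insert_le _ _)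
  rw [ncard_neighborSet_induce] at this
  omega

theorem TightCollapsible.three_le_ncard_neighborSet_inter (hR : TightCollapsible G R)
    {a u w : V}
    (ha : a ∈ boundary G R) (hu : u ∈ boundary G R) (hw : w ∈ boundary G R)
    (hau : a ≠ u) (haw : a ≠ w) (huw : u ≠ w) :
    3 ≤ (G.neighborSet a ∩ R).ncard := by
  have hnbr : (withEdge (G.induce R) ⟨u, hu.1⟩ ⟨w, hw.1⟩).neighborSet ⟨a, ha.1⟩ =
      (G.induce R).neighborSet ⟨a, ha.1⟩ :=
    neighborSet_withEdge_of_ne _ (fun h => hau (congrArg Subtype.val h))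
      (fun h => haw (congrArg Subtype.val h))
  have hne : ((G.induce R).neighborSet ⟨a, ha.1⟩).Nonempty := by
    rw [← Set.ncard_pos, ncard_neighborSet_induce]
    have := hR.two_le_ncard_neighborSet_inter ha hu hau
    omega
  have h3 := (hR.2 u hu w hw huw).le_ncard_neighborSet (k := 3) (hnbr ▸ hne)
  rwa [hnbr, ncard_neighborSet_induce] at h3

theorem TightCollapsible.exists_neighborSet_diff_eq_singleton (hR : TightCollapsible G R)
    {a b : V} (ha : a ∈ boundary G R) (hb : b ∈ boundary G R) (hab : a ≠ b)
    (hdeg : deg G a ≤ 3) : ∃ x, G.neighborSet a \ R = {x} := by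
  have h2 := hR.two_le_ncard_neighborSet_inter ha hb hab
  have h1 := (Set.ncard_pos).mpr (nonempty_neighborSet_diff_of_mem_boundary ha)
  rw [deg_eq_ncard_inter_add_ncard_diff (R := R)] at hdeg
  exact Set.ncard_eq_one.mp (by omega)

end Boundary

/-- Let `R` be a tight collapsible subset of a `4`-critical graph
`G` and let `S` be the boundary of `R`. If `|S| ≥ 3` then every vertex of `S`
has degree at least four in `G`, and if `|S| = 2` then at least one vertex of
`S` has degree at least four in `G`. -/
theorem statement_16 {V : Type} [Fintype V] (G : SimpleGraph V)
    (hG : IsKCritical G 4) (R : Set V) (hR : TightCollapsible G R) :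
    (3 ≤ (boundary G R).ncard → ∀ v ∈ boundary G R, 4 ≤ deg G v) ∧
    ((boundary G R).ncard = 2 → ∃ v ∈ boundary G R, 4 ≤ deg G v) := by
  refine ⟨fun hS v hv => ?_, fun hS => ?_⟩
  · have hS' : 1 < (boundary G R \ {v}).ncard := by
      rw [Set.ncard_sdiff_singleton_of_mem hv]; omega
    obtain ⟨u, w, ⟨hu, hvu⟩, ⟨hw, hvw⟩, huw⟩ := (Set.one_lt_ncard_iff).mp hS'
    have h3 := hR.three_le_ncard_neighborSet_inter hv hu hw (Ne.symm hvu) (Ne.symm hvw) huw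
    have := ncard_neighborSet_inter_lt_deg_of_mem_boundary hv
    omega
  · obtain ⟨u, v, huv, hS⟩ := Set.ncard_eq_two.mp hS
    have hu : u ∈ boundary G R := hS ▸ Set.mem_insert u {v}
    have hv : v ∈ boundary G R := hS ▸ Set.mem_insert_of_mem u rfl
    by_contra! hdeg
    obtain ⟨x, hx⟩ :=
      hR.exists_neighborSet_diff_eq_singleton hu hv huv (Nat.le_of_lt_succ (hdeg u hu))
    obtain ⟨y, hy⟩ :=
      hR.exists_neighborSet_diff_eq_singleton hv hu huv.symm (Nat.le_of_lt_succ (hdeg v hv))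
    have hxR : x ∈ G.neighborSet u \ R := hx ▸ rfl
    refine hG.1 <| hR.1.colorable_of_crossing_edges (y := y) hG hu hv hxR.2 hxR.1
      fun a ha b hb hab => ?_
    have haS : a ∈ boundary G R := ⟨ha, b, hb, hab⟩
    rw [hS] at haS
    rcases haS with rfl | rfl
    · exact .inl ⟨rfl, Set.mem_singleton_iff.mp (hx ▸ ⟨hab, hb⟩)⟩
    · exact .inr ⟨rfl, Set.mem_singleton_iff.mp (hy ▸ ⟨hab, hb⟩)⟩
end

section
/- If H is a tree (a finite connected acyclic graph) with maximum degree at most three, then α(H) ≤ (2/3)·|V(H)| + 1/3, i.e., 3·α(H) ≤ 2·|V(H)| + 1. -/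
open SimpleGraph

/-!
The complement of an independent set `S` is a vertex cover, so each of the `n - 1` edges of the
tree is incident to one of the `n - |S|` vertices outside `S`, each of degree at most three:
`n - 1 ≤ 3 (n - |S|)`.
-/

open Finset

namespace SimpleGraph

variable {V : Type*} [Fintype V] [DecidableEq V] {G : SimpleGraph V} [DecidableRel G.Adj]

theorem IsVertexCover.card_edgeFinset_le_sum_degree {c : Finset V} (hc : G.IsVertexCover c) :
    #G.edgeFinset ≤ ∑ v ∈ c, G.degree v := by
  have hcover : G.edgeFinset ⊆ c.biUnion fun v ↦ G.incidenceFinset v := by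
    intro e he
    induction e with
    | h u v =>
      have hadj : G.Adj u v := mem_edgeFinset.mp he
      rcases hc hadj with hu | hv
      · exact mem_biUnion.2 ⟨u, hu, (G.mem_incidenceFinset u _).2 ⟨hadj, Sym2.mem_mk_left u v⟩⟩
      · exact mem_biUnion.2 ⟨v, hv, (G.mem_incidenceFinset v _).2 ⟨hadj, Sym2.mem_mk_right u v⟩⟩
  calc #G.edgeFinset ≤ #(c.biUnion fun v ↦ G.incidenceFinset v) := card_le_card hcover
    _ ≤ ∑ v ∈ c, #(G.incidenceFinset v) := card_biUnion_le
    _ = ∑ v ∈ c, G.degree v := by simp only [card_incidenceFinset_eq_degree]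

theorem IsVertexCover.card_edgeFinset_le_mul {c : Finset V} {d : ℕ} (hc : G.IsVertexCover c)
    (hd : ∀ v, G.degree v ≤ d) : #G.edgeFinset ≤ #c * d :=
  hc.card_edgeFinset_le_sum_degree.trans (sum_le_card_nsmul _ _ _ fun v _ ↦ hd v)

theorem IsTree.card_le_card_compl_mul_add_one (hT : G.IsTree) {d : ℕ}
    (hd : ∀ v, G.degree v ≤ d) {s : Finset V} (hs : G.IsIndepSet s) :
    Fintype.card V ≤ #sᶜ * d + 1 := by
  have hcover : G.IsVertexCover ↑sᶜ := by rwa [coe_compl, isVertexCover_compl]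
  have hedges := hcover.card_edgeFinset_le_mul hd
  have htree := hT.card_edgeFinset
  omega

end SimpleGraph

theorem deg_eq_degree {V : Type} (G : SimpleGraph V) (v : V) [Fintype (G.neighborSet v)] :
    deg G v = G.degree v := by
  rw [deg, Nat.card_eq_fintype_card, card_neighborSet_eq_degree]

theorem exists_ncard_eq_indepNum {V : Type} [Finite V] (G : SimpleGraph V) :
    ∃ s : Set V, (∀ u ∈ s, ∀ v ∈ s, ¬ G.Adj u v) ∧ s.ncard = _root_.indepNum G := by
  refine Nat.sSup_mem (s := {n | ∃ s : Set V, (∀ u ∈ s, ∀ v ∈ s, ¬ G.Adj u v) ∧ s.ncard = n})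
    ⟨0, ∅, by simp, by simp⟩ ⟨Nat.card V, ?_⟩
  rintro _ ⟨s, -, rfl⟩
  exact Set.ncard_le_card s

/-- If `H` is a tree with maximum degree at most three, then
`3 α(H) ≤ 2 |V(H)| + 1`. -/
theorem statement_17 {V : Type} [Fintype V] (H : SimpleGraph V)
    (hT : H.IsTree) (hdeg : ∀ v, deg H v ≤ 3) :
    3 * _root_.indepNum H ≤ 2 * Fintype.card V + 1 := by
  classical
  obtain ⟨s, hs, hcard⟩ := exists_ncard_eq_indepNum H
  have hindep : H.IsIndepSet (s.toFinset : Set V) := by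
    rw [Set.coe_toFinset]
    exact fun u hu v hv _ ↦ hs u hu v hv
  have hbound :=
    hT.card_le_card_compl_mul_add_one (fun v ↦ (deg_eq_degree H v).ge.trans (hdeg v)) hindep
  rw [card_compl] at hbound
  have hle := s.toFinset.card_le_univ
  rw [← hcard, Set.ncard_eq_toFinset_card']
  omega
end

section
/- Let H be a finite connected simple graph and let s(H) = |E(H)| − |V(H)| + α(H). Then: s(H) = 0 if and only if H is a single vertex or a single edge; s(H) = 1 if and only if H is a triangle or a path on 3 or 4 vertices; and s(H) = 2 if and only if H is a cycle of length four or five, or a triangle with a pendant path on one or two further vertices attached at one of its vertices, or a tree with α(H) = 3. -/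
open SimpleGraph

/-!
Connectivity gives `|E| ≥ |V| - 1`, and `α ≥ 1`, so `s(H) = (|E| - |V| + 1) + (α - 1)` is a sum of
two natural numbers and `s(H) ≤ 2` leaves few cases. If `α = 1` then `H = K_n` and
`s(H) = (n - 1).choose 2`. If `α = 3` then `H` is a tree. If `α = 2`, the non-neighbours of any
vertex form a clique. At a leaf this clique has `n - 2` vertices, and summing degrees over it
(`2|E| ≥ (n - 2)(n - 3) + 3`) gives `n ≤ 4` for trees and `n ≤ 5` when `|E| = |V|`; a graph with
`|E| = |V|` and no leaf is `2`-regular, where that clique has at most three vertices. The few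
remaining configurations are recognised by a bijection onto the model graph sending edges to edges
(or non-edges to non-edges): when the edge counts agree, such a bijection is an isomorphism.
-/

open Finset

lemma Nat.le_two_of_choose_two_le_two {m : ℕ} (h : m.choose 2 ≤ 2) : m ≤ 2 := by
  by_contra! hm
  have := Nat.choose_le_choose 2 hm
  simp [Nat.choose] at this
  omega

instance {n : ℕ} : DecidableRel (pathGraph n).Adj := fun _ _ =>
  decidable_of_iff _ pathGraph_adj.symm

instance : DecidableRel trianglePendant1.Adj := fun a b =>
  inferInstanceAs (Decidable (a ≠ b ∧ _))

instance : DecidableRel trianglePendant2.Adj := fun a b =>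
  inferInstanceAs (Decidable (a ≠ b ∧ _))

lemma indepNum_eq_indepNum {V : Type} [Finite V] (G : SimpleGraph V) :
    _root_.indepNum G = G.indepNum := by
  have := Fintype.ofFinite V
  classical
  unfold _root_.indepNum SimpleGraph.indepNum
  congr 1
  ext n
  constructor
  · rintro ⟨s, hs, rfl⟩
    refine ⟨s.toFinset, ?_, ?_⟩
    · simpa [IsIndepSet, Set.Pairwise] using fun u hu v hv _ => hs u hu v hv
    · rw [Set.ncard_eq_toFinset_card']
  · rintro ⟨t, ht, rfl⟩
    exact ⟨t, fun u hu v hv huv => ht hu hv (G.ne_of_adj huv) huv, Set.ncard_coe_finset t⟩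

namespace SimpleGraph

variable {V W : Type} {G : SimpleGraph V}

section NumEdges

lemma numEdges_eq_card_edgeFinset [Fintype G.edgeSet] :
    numEdges G = #G.edgeFinset := by
  rw [numEdges, Nat.card_eq_fintype_card, edgeFinset_card]

lemma Iso.numEdges_eq {G' : SimpleGraph W} (e : G ≃g G') : numEdges G = numEdges G' :=
  Nat.card_congr e.mapEdgeSet

lemma numEdges_top [Fintype V] : numEdges (⊤ : SimpleGraph V) = (Fintype.card V).choose 2 := by
  classical
  rw [numEdges_eq_card_edgeFinset, card_edgeFinset_top_eq_card_choose_two]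

lemma numEdges_lt_choose_two_of_ne_top [Fintype V] (h : G ≠ ⊤) :
    numEdges G < (Fintype.card V).choose 2 := by
  classical
  rw [numEdges_eq_card_edgeFinset, ← card_edgeFinset_top_eq_card_choose_two]
  exact card_lt_card (edgeFinset_ssubset_edgeFinset.2 (lt_top_iff_ne_top.2 h))

lemma three_le_card_of_ne_top [Fintype V] (h : G ≠ ⊤) (hE : Fintype.card V ≤ numEdges G + 1) :
    3 ≤ Fintype.card V := by
  have hlt := numEdges_lt_choose_two_of_ne_top h
  by_contra! h3
  interval_cases Fintype.card V <;> simp [Nat.choose] at hlt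
  omega

lemma four_le_card_of_ne_top [Fintype V] (h : G ≠ ⊤) (hE : Fintype.card V ≤ numEdges G) :
    4 ≤ Fintype.card V :=
  (Nat.lt_or_ge _ 4).resolve_left fun h4 => by
    have hlt := numEdges_lt_choose_two_of_ne_top h
    have h3 := three_le_card_of_ne_top h (by omega)
    interval_cases Fintype.card V
    simp [Nat.choose] at hlt
    omega

lemma numEdges_pathGraph_three : numEdges (pathGraph 3) = 2 := by
  rw [numEdges_eq_card_edgeFinset]; decide

lemma numEdges_pathGraph_four : numEdges (pathGraph 4) = 3 := by
  rw [numEdges_eq_card_edgeFinset]; decide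

lemma numEdges_cycleGraph_four : numEdges (cycleGraph 4) = 4 := by
  rw [numEdges_eq_card_edgeFinset]; decide

lemma numEdges_cycleGraph_five : numEdges (cycleGraph 5) = 5 := by
  rw [numEdges_eq_card_edgeFinset]; decide

lemma numEdges_trianglePendant1 : numEdges trianglePendant1 = 4 := by
  rw [numEdges_eq_card_edgeFinset]; decide

lemma numEdges_trianglePendant2 : numEdges trianglePendant2 = 5 := by
  rw [numEdges_eq_card_edgeFinset]; decide

end NumEdges

section Isomorphism

lemma nonempty_iso_of_forall_adj [Finite V] {G' : SimpleGraph W} (e : V ≃ W)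
    (he : ∀ a b, G.Adj a b → G'.Adj (e a) (e b)) (hE : numEdges G' ≤ numEdges G) :
    Nonempty (G ≃g G') := by
  have : Finite W := .of_equiv V e
  let f : G →g G' := ⟨e, he _ _⟩
  have hsurj := ((Hom.mapEdgeSet.injective f e.injective).bijective_of_nat_card_le hE).2
  refine ⟨⟨e, fun {a b} => ⟨fun hab => ?_, he a b⟩⟩⟩
  obtain ⟨⟨d, hd⟩, hfd⟩ := hsurj ⟨s(e a, e b), hab⟩
  induction d using Sym2.ind with
  | h x y =>
    rcases Sym2.eq_iff.1 (congrArg Subtype.val hfd) with ⟨hx, hy⟩ | ⟨hx, hy⟩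
    · rwa [← e.injective hx, ← e.injective hy]
    · rw [← e.injective hx, ← e.injective hy]
      exact (G.mem_edgeSet.1 hd).symm

variable [Fintype V] {n : ℕ} {T : SimpleGraph (Fin n)}

lemma nonempty_iso_of_edges (f : Fin n → V) (hf : f.Injective) (hV : Fintype.card V = n)
    (L : List (Fin n × Fin n)) (hL : ∀ i j, T.Adj i j → (i, j) ∈ L ∨ (j, i) ∈ L)
    (hG : ∀ p ∈ L, G.Adj (f p.1) (f p.2)) (hE : numEdges G ≤ numEdges T) :
    Nonempty (G ≃g T) := by
  let e : Fin n ≃ V :=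
    .ofBijective f ((Fintype.bijective_iff_injective_and_card f).2 ⟨hf, by simp [hV]⟩)
  refine (nonempty_iso_of_forall_adj e (fun i j hij => ?_) hE).map Iso.symm
  rcases hL i j hij with h | h
  · exact hG _ h
  · exact (hG _ h).symm

lemma nonempty_iso_of_nonedges (f : Fin n → V) (hf : f.Injective) (hV : Fintype.card V = n)
    (L : List (Fin n × Fin n)) (hL : ∀ i j, i ≠ j → ¬ T.Adj i j → (i, j) ∈ L ∨ (j, i) ∈ L)
    (hG : ∀ p ∈ L, ¬ G.Adj (f p.1) (f p.2)) (hE : numEdges T ≤ numEdges G) :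
    Nonempty (G ≃g T) := by
  let e : Fin n ≃ V :=
    .ofBijective f ((Fintype.bijective_iff_injective_and_card f).2 ⟨hf, by simp [hV]⟩)
  refine nonempty_iso_of_forall_adj e.symm (fun a b hab => ?_) hE
  obtain ⟨i, rfl⟩ := e.surjective a
  obtain ⟨j, rfl⟩ := e.surjective b
  by_contra hT
  simp only [Equiv.symm_apply_apply] at hT
  have hij : i ≠ j := by rintro rfl; exact G.loopless.irrefl _ hab
  rcases hL i j hij hT with h | h
  · exact hG _ h hab
  · exact hG _ h hab.symm

lemma nonempty_iso_completeGraph (hn : Fintype.card V = n) :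
    Nonempty ((⊤ : SimpleGraph V) ≃g completeGraph (Fin n)) :=
  ⟨Iso.completeGraph (Fintype.equivFinOfCardEq hn)⟩

end Isomorphism

section IndepNum

lemma le_indepNum_iff [Finite V] {k : ℕ} : k ≤ G.indepNum ↔ ∃ s, G.IsNIndepSet k s := by
  refine ⟨fun hk => ?_, fun ⟨s, hs⟩ => hs.card_eq ▸ hs.isIndepSet.card_le_indepNum⟩
  obtain ⟨s, hs⟩ := G.exists_isNIndepSet_indepNum
  obtain ⟨t, hts, rfl⟩ := exists_subset_card_eq (hs.card_eq ▸ hk)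
  exact ⟨t, hs.isIndepSet.mono (by simpa using hts), rfl⟩

lemma indepNum_le_indepNum_of_iso [Finite V] [Finite W] {G' : SimpleGraph W} (e : G ≃g G') :
    G.indepNum ≤ G'.indepNum := by
  classical
  obtain ⟨s, hs⟩ := le_indepNum_iff.1 (le_refl G.indepNum)
  refine le_indepNum_iff.2 ⟨s.map e.toEquiv.toEmbedding, ?_, by simpa using hs.card_eq⟩
  intro x hx y hy hxy
  simp only [coe_map, Set.mem_image, mem_coe] at hx hy
  obtain ⟨a, ha, rfl⟩ := hx
  obtain ⟨b, hb, rfl⟩ := hy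
  simpa [e.map_adj_iff] using hs.isIndepSet ha hb (fun h => hxy (by rw [h]))

lemma Iso.indepNum_eq [Finite V] {G' : SimpleGraph W} (e : G ≃g G') :
    G.indepNum = G'.indepNum :=
  have : Finite W := .of_equiv V e.toEquiv
  le_antisymm (indepNum_le_indepNum_of_iso e) (indepNum_le_indepNum_of_iso e.symm)

lemma one_le_indepNum [Finite V] [Nonempty V] : 1 ≤ G.indepNum :=
  le_indepNum_iff.2 ⟨{Classical.arbitrary V}, by simp [isNIndepSet_iff]⟩

lemma two_le_indepNum_iff [Finite V] : 2 ≤ G.indepNum ↔ ∃ x y, x ≠ y ∧ ¬ G.Adj x y := by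
  classical
  rw [le_indepNum_iff]
  constructor
  · rintro ⟨s, hs⟩
    obtain ⟨x, y, hxy, rfl⟩ := card_eq_two.1 hs.card_eq
    exact ⟨x, y, hxy, hs.isIndepSet (by simp) (by simp) hxy⟩
  · rintro ⟨x, y, hxy, h⟩
    refine ⟨{x, y}, ?_, card_pair hxy⟩
    rw [isIndepSet_iff, coe_pair]
    exact Set.pairwise_pair.2 fun _ => ⟨h, fun h' => h h'.symm⟩

lemma indepNum_le_one_iff [Finite V] : G.indepNum ≤ 1 ↔ G = ⊤ := by
  rw [← not_lt, Nat.lt_iff_add_one_le, two_le_indepNum_iff, eq_top_iff]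
  push Not
  exact ⟨fun h x y hxy => h x y hxy, fun h x y hxy => h hxy⟩

lemma indepNum_top [Finite V] [Nonempty V] : (⊤ : SimpleGraph V).indepNum = 1 :=
  le_antisymm (indepNum_le_one_iff.2 rfl) one_le_indepNum

lemma indepNum_eq_two [Finite V] (h2 : ∃ x y, x ≠ y ∧ ¬ G.Adj x y)
    (h3 : ∀ s, ¬ G.IsNIndepSet 3 s) : G.indepNum = 2 := by
  refine le_antisymm ?_ (two_le_indepNum_iff.2 h2)
  by_contra! h
  obtain ⟨s, hs⟩ := le_indepNum_iff.1 (Nat.lt_iff_add_one_le.1 h)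
  exact h3 s hs

lemma isClique_nonadj_of_indepNum_lt_three [Finite V] (hα : G.indepNum < 3) (v : V) :
    G.IsClique {x | x ≠ v ∧ ¬ G.Adj v x} := by
  classical
  rintro x ⟨hxv, hx⟩ y ⟨hyv, hy⟩ hxy
  by_contra h
  refine hα.not_ge (le_indepNum_iff.2 ⟨{v, x, y}, ?_⟩)
  rw [← isNClique_compl, is3Clique_triple_iff]
  simp_all [compl_adj, eq_comm]

end IndepNum

section Degree

lemma Connected.exists_adj_of_mem_of_notMem (hG : G.Connected) {S : Set V} {x y : V}
    (hx : x ∈ S) (hy : y ∉ S) : ∃ p ∈ S, ∃ q ∉ S, G.Adj p q := by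
  obtain ⟨d, -, hd1, hd2⟩ := (hG.preconnected x y).some.exists_boundary_dart S hx hy
  exact ⟨_, hd1, _, hd2, d.adj⟩

variable [Fintype V] [DecidableRel G.Adj]

lemma Connected.exists_degree_eq_one_or_forall_degree_eq_two [Nontrivial V] (hG : G.Connected)
    (hE : numEdges G ≤ Fintype.card V) : (∃ v, G.degree v = 1) ∨ ∀ v, G.degree v = 2 := by
  classical
  by_contra! h
  have h2 : ∀ v, 2 ≤ G.degree v := fun v => by
    have := hG.preconnected.degree_pos_of_nontrivial v
    have := h.1 v
    omega
  have hsum : ∑ v, G.degree v = ∑ _v : V, 2 := by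
    refine le_antisymm ?_ (sum_le_sum fun v _ => h2 v)
    rw [sum_degrees_eq_twice_card_edges, ← numEdges_eq_card_edgeFinset]
    simp only [sum_const, card_univ, smul_eq_mul]
    omega
  obtain ⟨v, hv⟩ := h.2
  exact hv ((sum_eq_sum_iff_of_le fun v _ => h2 v).1 hsum.symm v (mem_univ v)).symm

variable [DecidableEq V]

lemma isClique_compl_insert_neighborFinset (hα : G.indepNum < 3) (v : V) :
    G.IsClique ↑((insert v (G.neighborFinset v))ᶜ) :=
  (isClique_nonadj_of_indepNum_lt_three hα v).subset fun x hx => by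
    simpa [not_or, and_comm] using hx

lemma eq_or_eq_of_adj_of_degree_eq_two {v x y z : V} (hv : G.degree v = 2) (hxy : x ≠ y)
    (hx : G.Adj v x) (hy : G.Adj v y) (hz : G.Adj v z) : z = x ∨ z = y := by
  by_contra! h
  have : 2 < #(G.neighborFinset v) :=
    two_lt_card_iff.2 ⟨x, y, z, by simpa, by simpa, by simpa, hxy, h.1.symm, h.2.symm⟩
  rw [card_neighborFinset_eq_degree] at this
  omega

lemma IsClique.card_sub_one_le_degree {K : Finset V} (hK : G.IsClique (K : Set V)) {x : V}
    (hx : x ∈ K) : #K - 1 ≤ G.degree x := by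
  rw [← card_erase_of_mem hx, ← card_neighborFinset_eq_degree]
  exact card_le_card fun y hy => by simpa using hK hx (mem_erase.1 hy).2 (mem_erase.1 hy).1.symm

lemma IsClique.card_mul_le_sum_degree {K : Finset V} (hK : G.IsClique (K : Set V)) :
    #K * (#K - 1) ≤ ∑ x ∈ K, G.degree x := by
  calc #K * (#K - 1) = ∑ _x ∈ K, (#K - 1) := by simp
    _ ≤ _ := sum_le_sum fun x hx => hK.card_sub_one_le_degree hx

lemma Connected.eq_univ_of_isClique (hG : G.Connected) {K : Finset V}
    (hK : G.IsClique (K : Set V)) (hne : K.Nonempty) (hdeg : ∀ x ∈ K, G.degree x ≤ #K - 1) :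
    K = univ := by
  by_contra h
  obtain ⟨y, hy⟩ : ∃ y, y ∉ K := by simpa [eq_univ_iff_forall] using h
  obtain ⟨p, hp, q, hq, hpq⟩ := hG.exists_adj_of_mem_of_notMem (S := K) hne.choose_spec hy
  have hN : K.erase p = G.neighborFinset p := by
    refine eq_of_subset_of_card_le (fun z hz => ?_) ?_
    · simpa using hK hp (mem_erase.1 hz).2 (mem_erase.1 hz).1.symm
    · rw [card_erase_of_mem hp, card_neighborFinset_eq_degree]; exact hdeg p hp
  exact hq (mem_of_mem_erase (hN ▸ (mem_neighborFinset _ _ _).2 hpq : q ∈ K.erase p))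

lemma Connected.not_adj_of_forall_degree_eq_two (hG : G.Connected)
    (hdeg : ∀ v, G.degree v = 2) (hn : 4 ≤ Fintype.card V) {v a b : V} (hva : G.Adj v a)
    (hvb : G.Adj v b) (hab : a ≠ b) : ¬ G.Adj a b := fun h => by
  have h3 : #({v, a, b} : Finset V) = 3 := card_eq_three.2 ⟨v, a, b, hva.ne, hvb.ne, hab, rfl⟩
  have := hG.eq_univ_of_isClique (K := {v, a, b})
    (by simp [isClique_insert, hva, hvb, h, hab, hva.ne, hvb.ne])
    ⟨v, by simp⟩ (fun x _ => by rw [hdeg x, h3])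
  rw [this, card_univ] at h3
  omega

end Degree

section Classification

variable [Fintype V] [DecidableEq V] {H : SimpleGraph V} [DecidableRel H.Adj]

lemma exists_adj_of_neighborFinset_eq_singleton (hconn : H.Connected) {v u : V}
    (hN : H.neighborFinset v = {u}) (hn : 3 ≤ Fintype.card V) :
    ∃ b, b ≠ v ∧ b ≠ u ∧ H.Adj u b := by
  have hvu : H.Adj v u := by rw [← mem_neighborFinset, hN]; exact mem_singleton_self u
  have hcard : #(({v, u} : Finset V)ᶜ) = Fintype.card V - 2 := by
    rw [card_compl, card_pair hvu.ne]
  obtain ⟨y, hy⟩ := card_pos.1 (show 0 < #(({v, u} : Finset V)ᶜ) by omega)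
  obtain ⟨p, hp, q, hq, hpq⟩ := hconn.exists_adj_of_mem_of_notMem
    (S := ↑({v, u} : Finset V)) (x := v) (by simp) (by simpa using hy)
  simp only [coe_insert, coe_singleton, Set.mem_insert_iff, Set.mem_singleton_iff,
    not_or] at hp hq
  rcases hp with rfl | rfl
  · exact absurd (by simpa [hN] using (mem_neighborFinset _ _ _).2 hpq) hq.2
  · exact ⟨q, hq.1, hq.2, hpq⟩

lemma card_sub_two_mul_le_of_neighborFinset_eq_singleton (hα : H.indepNum < 3) {v u b : V}
    (hN : H.neighborFinset v = {u}) (hub : H.Adj u b) (hbv : b ≠ v) :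
    (Fintype.card V - 2) * (Fintype.card V - 3) + 3 ≤ 2 * numEdges H := by
  have hvu : H.Adj v u := by rw [← mem_neighborFinset, hN]; exact mem_singleton_self u
  have hK := isClique_compl_insert_neighborFinset (G := H) hα v
  rw [hN] at hK
  set K := ({v, u} : Finset V)ᶜ
  have hKcard : #K = Fintype.card V - 2 := by rw [card_compl, card_pair hvu.ne]
  have hsum := hK.card_mul_le_sum_degree
  have hv : H.degree v = 1 := by rw [← card_neighborFinset_eq_degree, hN, card_singleton]
  have hu : 2 ≤ H.degree u := by
    rw [← card_neighborFinset_eq_degree, ← card_pair hbv]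
    exact card_le_card (by simp [insert_subset_iff, hub, hvu.symm])
  calc (Fintype.card V - 2) * (Fintype.card V - 3) + 3
      ≤ ∑ x ∈ {v, u}, H.degree x + ∑ x ∈ K, H.degree x := by
        rw [sum_pair hvu.ne]
        rw [hKcard, show Fintype.card V - 2 - 1 = Fintype.card V - 3 by omega] at hsum
        omega
    _ = 2 * numEdges H := by
        rw [sum_add_sum_compl, sum_degrees_eq_twice_card_edges, numEdges_eq_card_edgeFinset]

theorem IsTree.nonempty_iso_pathGraph (hT : H.IsTree) (hα : H.indepNum = 2) :
    Nonempty (H ≃g pathGraph 3) ∨ Nonempty (H ≃g pathGraph 4) := by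
  have hE : numEdges H + 1 = Fintype.card V := by
    rw [numEdges_eq_card_edgeFinset]; exact hT.card_edgeFinset
  have hn3 := three_le_card_of_ne_top (mt indepNum_le_one_iff.2 (by omega)) hE.ge
  have : Nontrivial V := Fintype.one_lt_card_iff_nontrivial.1 (by omega)
  obtain ⟨v, hv⟩ := hT.exists_vert_degree_one_of_nontrivial
  obtain ⟨u, hN⟩ := card_eq_one.1 ((H.card_neighborFinset_eq_degree v).trans hv)
  have hvu : H.Adj v u := by rw [← mem_neighborFinset, hN]; exact mem_singleton_self u
  obtain ⟨b, hbv, hbu, hub⟩ := exists_adj_of_neighborFinset_eq_singleton hT.connected hN hn3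
  have hbound := card_sub_two_mul_le_of_neighborFinset_eq_singleton (by omega) hN hub hbv
  have hn4 : Fintype.card V ≤ 4 := by
    by_contra! h
    have := Nat.mul_le_mul_left (Fintype.card V - 2) (show 2 ≤ Fintype.card V - 3 by omega)
    omega
  obtain hn | hn : Fintype.card V = 3 ∨ Fintype.card V = 4 := by omega
  · refine .inl <| nonempty_iso_of_edges ![v, u, b] ?_ hn [(0, 1), (1, 2)] (by decide)
      (by simp [hvu, hub]) (by rw [numEdges_pathGraph_three]; omega)
    rw [← List.nodup_ofFn]
    simp [hvu.ne, hbv.symm, hbu.symm]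
  · obtain ⟨c, hc⟩ := card_eq_one.1 (show #(({v, u, b} : Finset V)ᶜ) = 1 by
      rw [card_compl, card_eq_three.2 ⟨v, u, b, hvu.ne, hbv.symm, hbu.symm, rfl⟩]
      omega)
    obtain ⟨hcv, hcu, hcb⟩ : c ≠ v ∧ c ≠ u ∧ c ≠ b := by
      simpa using (eq_singleton_iff_unique_mem.1 hc).1
    have hK := isClique_compl_insert_neighborFinset (G := H) (by omega) v
    rw [hN] at hK
    have hbc : H.Adj b c := hK (by simp [hbv, hbu]) (by simp [hcv, hcu]) hcb.symm
    refine .inr <| nonempty_iso_of_edges ![v, u, b, c] ?_ hn [(0, 1), (1, 2), (2, 3)]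
      (by decide) (by simp [hvu, hub, hbc]) (by rw [numEdges_pathGraph_four]; omega)
    rw [← List.nodup_ofFn]
    simp [hvu.ne, hbv.symm, hbu.symm, hcv.symm, hcu.symm, hcb.symm]

theorem nonempty_iso_trianglePendant_of_degree_eq_one (hconn : H.Connected)
    (hE : numEdges H = Fintype.card V) (hα : H.indepNum = 2) {v : V} (hv : H.degree v = 1) :
    Nonempty (H ≃g trianglePendant1) ∨ Nonempty (H ≃g trianglePendant2) := by
  have hn4 := four_le_card_of_ne_top (mt indepNum_le_one_iff.2 (by omega)) hE.ge
  obtain ⟨u, hN⟩ := card_eq_one.1 ((H.card_neighborFinset_eq_degree v).trans hv)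
  have hvu : H.Adj v u := by rw [← mem_neighborFinset, hN]; exact mem_singleton_self u
  obtain ⟨b, hbv, hbu, hub⟩ := exists_adj_of_neighborFinset_eq_singleton hconn hN (by omega)
  have hbound := card_sub_two_mul_le_of_neighborFinset_eq_singleton (by omega) hN hub hbv
  have hn5 : Fintype.card V ≤ 5 := by
    by_contra! h
    have := Nat.mul_le_mul_left (Fintype.card V - 2) (show 3 ≤ Fintype.card V - 3 by omega)
    omega
  have hK := isClique_compl_insert_neighborFinset (G := H) (by omega) v
  rw [hN] at hK
  have hnv : ∀ x, x ≠ u → ¬ H.Adj x v := fun x hx h =>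
    hx (by simpa [hN] using (mem_neighborFinset _ _ _).2 h.symm)
  have h3 : #(({v, u, b} : Finset V)ᶜ) = Fintype.card V - 3 := by
    rw [card_compl, card_eq_three.2 ⟨v, u, b, hvu.ne, hbv.symm, hbu.symm, rfl⟩]
  obtain hn | hn : Fintype.card V = 4 ∨ Fintype.card V = 5 := by omega
  · obtain ⟨c, hc⟩ := card_eq_one.1 (show #(({v, u, b} : Finset V)ᶜ) = 1 by omega)
    obtain ⟨hcv, hcu, hcb⟩ : c ≠ v ∧ c ≠ u ∧ c ≠ b := by
      simpa using (eq_singleton_iff_unique_mem.1 hc).1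
    refine .inl <| nonempty_iso_of_nonedges ![u, b, c, v] ?_ hn [(1, 3), (2, 3)] (by decide)
      (by simp [hnv b hbu, hnv c hcu]) (by rw [numEdges_trianglePendant1]; omega)
    rw [← List.nodup_ofFn]
    simp [hvu.ne', hbv, hbu.symm, hcv, hcu.symm, hcb.symm]
  · obtain ⟨c, d, hcd, hc⟩ := card_eq_two.1 (show #(({v, u, b} : Finset V)ᶜ) = 2 by omega)
    obtain ⟨hcv, hcu, hcb⟩ : c ≠ v ∧ c ≠ u ∧ c ≠ b := by
      simpa using (by simp [hc] : c ∈ ({v, u, b} : Finset V)ᶜ)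
    obtain ⟨hdv, hdu, hdb⟩ : d ≠ v ∧ d ≠ u ∧ d ≠ b := by
      simpa using (by simp [hc] : d ∈ ({v, u, b} : Finset V)ᶜ)
    have hbc : H.Adj b c := hK (by simp [hbv, hbu]) (by simp [hcv, hcu]) hcb.symm
    have hbd : H.Adj b d := hK (by simp [hbv, hbu]) (by simp [hdv, hdu]) hdb.symm
    have hcd' : H.Adj c d := hK (by simp [hcv, hcu]) (by simp [hdv, hdu]) hcd
    refine .inr <| nonempty_iso_of_edges ![b, c, d, u, v] ?_ hn
      [(0, 1), (1, 2), (2, 0), (0, 3), (3, 4)] (by decide)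
      (by simp [hbc, hcd', hbd.symm, hub.symm, hvu.symm])
      (by rw [numEdges_trianglePendant2]; omega)
    rw [← List.nodup_ofFn]
    simp [hvu.ne', hbv, hbu, hcv, hcu, hcb.symm, hdv, hdu, hdb.symm, hcd]

lemma nonempty_iso_cycleGraph_five (hdeg : ∀ v, H.degree v = 2) (hn : Fintype.card V = 5)
    (hE : numEdges H = 5) {v a b : V} (hN : H.neighborFinset v = {a, b}) (hab : a ≠ b)
    (hnab : ¬ H.Adj a b) (hK : H.IsClique ↑(({v, a, b} : Finset V)ᶜ)) :
    Nonempty (H ≃g cycleGraph 5) := by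
  have hva : H.Adj v a := by rw [← mem_neighborFinset, hN]; simp
  have hvb : H.Adj v b := by rw [← mem_neighborFinset, hN]; simp
  have h3 : #({v, a, b} : Finset V) = 3 := card_eq_three.2 ⟨v, a, b, hva.ne, hvb.ne, hab, rfl⟩
  obtain ⟨t, hat, htv⟩ := exists_mem_ne
    (show 1 < #(H.neighborFinset a) by rw [card_neighborFinset_eq_degree, hdeg]; omega) v
  rw [mem_neighborFinset] at hat
  have hta : t ≠ a := hat.ne'
  have htb : t ≠ b := by rintro rfl; exact hnab hat
  obtain ⟨d, hd⟩ := card_eq_one.1 (show #(({t, v, a, b} : Finset V)ᶜ) = 1 by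
    rw [card_compl, card_insert_of_notMem (by simp [htv, hta, htb]), h3, hn])
  have hdmem := eq_singleton_iff_unique_mem.1 hd
  obtain ⟨hdt, hdv, hda, hdb⟩ : d ≠ t ∧ d ≠ v ∧ d ≠ a ∧ d ≠ b := by simpa using hdmem.1
  have htd : H.Adj t d := hK (by simp [htv, hta, htb]) (by simp [hdv, hda, hdb]) hdt.symm
  obtain ⟨t', hbt', ht'v⟩ := exists_mem_ne
    (show 1 < #(H.neighborFinset b) by rw [card_neighborFinset_eq_degree, hdeg]; omega) v
  rw [mem_neighborFinset] at hbt'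
  -- `t` already has the two neighbours `a` and `d`, so `b`'s second neighbour is `d`
  have ht't : t' ≠ t := fun h => by
    rcases eq_or_eq_of_adj_of_degree_eq_two (hdeg t) hab hat.symm (h ▸ hbt').symm htd with h | h
    exacts [hda h, hdb h]
  have hbd : H.Adj b d := hdmem.2 t' (by
    simpa [ht't, ht'v, hbt'.ne'] using fun h : t' = a => hnab (h ▸ hbt').symm) ▸ hbt'
  refine nonempty_iso_of_edges ![v, a, t, d, b] ?_ hn
    [(0, 1), (1, 2), (2, 3), (3, 4), (4, 0)] (by decide)
    (by simp [hva, hat, htd, hbd.symm, hvb.symm]) (by rw [numEdges_cycleGraph_five]; omega)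
  rw [← List.nodup_ofFn]
  simp [hva.ne, hvb.ne, hab, htv.symm, hta.symm, htb, hdv.symm, hda.symm, hdb, hdt.symm]

theorem nonempty_iso_cycleGraph_of_forall_degree_eq_two (hconn : H.Connected)
    (hE : numEdges H = Fintype.card V) (hα : H.indepNum = 2) (hdeg : ∀ v, H.degree v = 2) :
    Nonempty (H ≃g cycleGraph 4) ∨ Nonempty (H ≃g cycleGraph 5) := by
  have hn4 := four_le_card_of_ne_top (mt indepNum_le_one_iff.2 (by omega)) hE.ge
  obtain ⟨v⟩ := hconn.nonempty
  obtain ⟨a, b, hab, hN⟩ := card_eq_two.1 ((H.card_neighborFinset_eq_degree v).trans (hdeg v))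
  have hva : H.Adj v a := by rw [← mem_neighborFinset, hN]; simp
  have hvb : H.Adj v b := by rw [← mem_neighborFinset, hN]; simp
  have hnab := hconn.not_adj_of_forall_degree_eq_two hdeg hn4 hva hvb hab
  have hK := isClique_compl_insert_neighborFinset (G := H) (by omega) v
  rw [hN] at hK
  have hKcard : #(({v, a, b} : Finset V)ᶜ) = Fintype.card V - 3 := by
    rw [card_compl, card_eq_three.2 ⟨v, a, b, hva.ne, hvb.ne, hab, rfl⟩]
  obtain hn | hn | hn : Fintype.card V = 4 ∨ Fintype.card V = 5 ∨ Fintype.card V = 6 := by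
    obtain ⟨x, hx⟩ := card_pos.1 (show 0 < #(({v, a, b} : Finset V)ᶜ) by omega)
    have := hK.card_sub_one_le_degree hx
    rw [hdeg x] at this
    omega
  · obtain ⟨c, hc⟩ := card_eq_one.1 (show #(({v, a, b} : Finset V)ᶜ) = 1 by omega)
    obtain ⟨hcv, hca, hcb⟩ : c ≠ v ∧ c ≠ a ∧ c ≠ b := by
      simpa using (eq_singleton_iff_unique_mem.1 hc).1
    have hvc : ¬ H.Adj v c := by rw [← mem_neighborFinset, hN]; simp [hca, hcb]
    refine .inl <| nonempty_iso_of_nonedges ![v, a, c, b] ?_ hn [(0, 2), (1, 3)] (by decide)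
      (by simp [hvc, hnab]) (by rw [numEdges_cycleGraph_four]; omega)
    rw [← List.nodup_ofFn]
    simp [hva.ne, hvb.ne, hab, hcv.symm, hca.symm, hcb]
  · exact .inr (nonempty_iso_cycleGraph_five hdeg hn (by omega) hN hab hnab hK)
  · have hKuniv := hconn.eq_univ_of_isClique hK (card_pos.1 (by omega))
      (fun x _ => by rw [hdeg x, hKcard]; omega)
    have hv : v ∈ ({v, a, b} : Finset V)ᶜ := by rw [hKuniv]; exact mem_univ v
    simp at hv

end Classification

section SVal

lemma sVal_eq [Fintype V] :
    sVal G = numEdges G - Fintype.card V + G.indepNum := by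
  rw [sVal, indepNum_eq_indepNum, Nat.card_eq_fintype_card]

lemma Iso.sVal_eq [Finite V] {G' : SimpleGraph W} (e : G ≃g G') :
    sVal G = sVal G' := by
  have : Finite W := .of_equiv V e.toEquiv
  rw [sVal, sVal, e.numEdges_eq, Nat.card_congr e.toEquiv, indepNum_eq_indepNum,
    indepNum_eq_indepNum, e.indepNum_eq]

lemma sVal_top [Fintype V] [Nonempty V] :
    sVal (⊤ : SimpleGraph V) = (Fintype.card V - 1).choose 2 := by
  obtain ⟨k, hk⟩ : ∃ k, Fintype.card V = k + 1 :=
    ⟨_, (Nat.succ_pred_eq_of_pos Fintype.card_pos).symm⟩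
  rw [sVal_eq, numEdges_top, indepNum_top, hk, Nat.choose_succ_succ', Nat.choose_one_right,
    Nat.add_sub_cancel]
  push_cast
  ring

lemma sVal_completeGraph_one : sVal (completeGraph (Fin 1)) = 0 := by
  rw [sVal_top]; rfl

lemma sVal_completeGraph_two : sVal (completeGraph (Fin 2)) = 0 := by
  rw [sVal_top]; rfl

lemma sVal_completeGraph_three : sVal (completeGraph (Fin 3)) = 1 := by
  rw [sVal_top]; rfl

lemma sVal_pathGraph_three : sVal (pathGraph 3) = 1 := by
  rw [sVal_eq, numEdges_pathGraph_three, indepNum_eq_two (by decide) (by decide)]; rfl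

lemma sVal_pathGraph_four : sVal (pathGraph 4) = 1 := by
  rw [sVal_eq, numEdges_pathGraph_four, indepNum_eq_two (by decide) (by decide)]; rfl

lemma sVal_cycleGraph_four : sVal (cycleGraph 4) = 2 := by
  rw [sVal_eq, numEdges_cycleGraph_four, indepNum_eq_two (by decide) (by decide)]; rfl

lemma sVal_cycleGraph_five : sVal (cycleGraph 5) = 2 := by
  rw [sVal_eq, numEdges_cycleGraph_five, indepNum_eq_two (by decide) (by decide)]; rfl

lemma sVal_trianglePendant1 : sVal trianglePendant1 = 2 := by
  rw [sVal_eq, numEdges_trianglePendant1, indepNum_eq_two (by decide) (by decide)]; rfl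

lemma sVal_trianglePendant2 : sVal trianglePendant2 = 2 := by
  rw [sVal_eq, numEdges_trianglePendant2, indepNum_eq_two (by decide) (by decide)]; rfl

variable [Fintype V] {H : SimpleGraph V}

lemma exists_sVal_eq_add (hconn : H.Connected) : ∃ c k, numEdges H + 1 = Fintype.card V + c ∧
    H.indepNum = k + 1 ∧ sVal H = c + k := by
  have hE := hconn.card_vert_le_card_edgeSet_add_one
  rw [Nat.card_eq_fintype_card (α := V)] at hE
  have : Nonempty V := hconn.nonempty
  have hα : 1 ≤ H.indepNum := one_le_indepNum
  refine ⟨numEdges H + 1 - Fintype.card V, H.indepNum - 1, by unfold numEdges; omega, by omega, ?_⟩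
  rw [sVal_eq]
  push_cast [show Fintype.card V ≤ numEdges H + 1 from hE, hα]
  ring

lemma isTree_of_numEdges_add_one (hconn : H.Connected) (hE : numEdges H + 1 = Fintype.card V) :
    H.IsTree :=
  isTree_iff_connected_and_card.2 ⟨hconn, by rw [Nat.card_eq_fintype_card (α := V)]; exact hE⟩

theorem sVal_eq_zero_iff (hconn : H.Connected) :
    sVal H = 0 ↔
      Nonempty (H ≃g completeGraph (Fin 1)) ∨ Nonempty (H ≃g completeGraph (Fin 2)) := by
  refine ⟨fun hs => ?_, ?_⟩
  · have : Nonempty V := hconn.nonempty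
    obtain ⟨c, k, -, hα, hsc⟩ := exists_sVal_eq_add hconn
    obtain rfl := indepNum_le_one_iff.1 (show H.indepNum ≤ 1 by omega)
    rw [sVal_top] at hs
    have := Nat.choose_eq_zero_iff.1 (by exact_mod_cast hs)
    have := Fintype.card_pos (α := V)
    have : Fintype.card V ≤ 2 := by omega
    interval_cases hn : Fintype.card V
    · exact .inl (nonempty_iso_completeGraph hn)
    · exact .inr (nonempty_iso_completeGraph hn)
  · rintro (⟨⟨e⟩⟩ | ⟨⟨e⟩⟩)
    · rw [e.sVal_eq, sVal_completeGraph_one]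
    · rw [e.sVal_eq, sVal_completeGraph_two]

theorem sVal_eq_one_iff (hconn : H.Connected) :
    sVal H = 1 ↔
      Nonempty (H ≃g completeGraph (Fin 3)) ∨
      Nonempty (H ≃g pathGraph 3) ∨ Nonempty (H ≃g pathGraph 4) := by
  classical
  refine ⟨fun hs => ?_, ?_⟩
  · have : Nonempty V := hconn.nonempty
    obtain ⟨c, k, hE, hα, hsc⟩ := exists_sVal_eq_add hconn
    obtain ⟨rfl, rfl⟩ | ⟨rfl, rfl⟩ : c = 1 ∧ k = 0 ∨ c = 0 ∧ k = 1 := by omega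
    · obtain rfl := indepNum_le_one_iff.1 hα.le
      rw [sVal_top] at hs
      replace hs : (Fintype.card V - 1).choose 2 = 1 := by exact_mod_cast hs
      have := Nat.le_two_of_choose_two_le_two (hs.le.trans one_le_two)
      have := Fintype.card_pos (α := V)
      have : Fintype.card V ≤ 3 := by omega
      interval_cases hn : Fintype.card V <;> simp_all [nonempty_iso_completeGraph hn]
    · exact .inr ((isTree_of_numEdges_add_one hconn (by omega)).nonempty_iso_pathGraph hα)
  · rintro (⟨⟨e⟩⟩ | ⟨⟨e⟩⟩ | ⟨⟨e⟩⟩)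
    · rw [e.sVal_eq, sVal_completeGraph_three]
    · rw [e.sVal_eq, sVal_pathGraph_three]
    · rw [e.sVal_eq, sVal_pathGraph_four]

theorem sVal_eq_two_iff (hconn : H.Connected) :
    sVal H = 2 ↔
      Nonempty (H ≃g cycleGraph 4) ∨ Nonempty (H ≃g cycleGraph 5) ∨
      Nonempty (H ≃g trianglePendant1) ∨ Nonempty (H ≃g trianglePendant2) ∨
      (H.IsTree ∧ _root_.indepNum H = 3) := by
  classical
  rw [indepNum_eq_indepNum]
  refine ⟨fun hs => ?_, ?_⟩
  · have : Nonempty V := hconn.nonempty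
    obtain ⟨c, k, hE, hα, hsc⟩ := exists_sVal_eq_add hconn
    obtain ⟨rfl, rfl⟩ | ⟨rfl, rfl⟩ | ⟨rfl, rfl⟩ :
        c = 2 ∧ k = 0 ∨ c = 1 ∧ k = 1 ∨ c = 0 ∧ k = 2 := by omega
    · obtain rfl := indepNum_le_one_iff.1 hα.le
      rw [sVal_top] at hs
      replace hs : (Fintype.card V - 1).choose 2 = 2 := by exact_mod_cast hs
      have := Nat.le_two_of_choose_two_le_two hs.le
      interval_cases hn : Fintype.card V - 1 <;> simp_all
    · obtain ⟨x, y, hxy, -⟩ := two_le_indepNum_iff.1 (show 2 ≤ H.indepNum by omega)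
      have : Nontrivial V := ⟨x, y, hxy⟩
      rcases hconn.exists_degree_eq_one_or_forall_degree_eq_two (by omega) with ⟨v, hv⟩ | hdeg
      · rcases nonempty_iso_trianglePendant_of_degree_eq_one hconn (by omega) hα hv with h | h
        exacts [.inr (.inr (.inl h)), .inr (.inr (.inr (.inl h)))]
      · rcases nonempty_iso_cycleGraph_of_forall_degree_eq_two hconn (by omega) hα hdeg with h | h
        exacts [.inl h, .inr (.inl h)]
    · exact .inr <| .inr <| .inr <| .inr ⟨isTree_of_numEdges_add_one hconn (by omega), hα⟩
  · rintro (⟨⟨e⟩⟩ | ⟨⟨e⟩⟩ | ⟨⟨e⟩⟩ | ⟨⟨e⟩⟩ | ⟨hT, hα⟩)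
    · rw [e.sVal_eq, sVal_cycleGraph_four]
    · rw [e.sVal_eq, sVal_cycleGraph_five]
    · rw [e.sVal_eq, sVal_trianglePendant1]
    · rw [e.sVal_eq, sVal_trianglePendant2]
    · have hE : numEdges H + 1 = Fintype.card V := by
        rw [numEdges_eq_card_edgeFinset]; exact hT.card_edgeFinset
      rw [sVal_eq, hα]
      push_cast [← hE]
      ring

end SVal

end SimpleGraph

/-- For a finite connected graph `H` with
`s(H) = |E(H)| - |V(H)| + α(H)`: `s(H) = 0` iff `H` is a single vertex or a
single edge; `s(H) = 1` iff `H` is a triangle or a path on `3` or `4` vertices;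
`s(H) = 2` iff `H` is a cycle of length four or five, or a triangle with a
pendant path on one or two further vertices, or a tree with `α(H) = 3`. -/
theorem statement_18 {V : Type} [Fintype V] (H : SimpleGraph V)
    (hconn : H.Connected) :
    (sVal H = 0 ↔
      Nonempty (H ≃g completeGraph (Fin 1)) ∨
      Nonempty (H ≃g completeGraph (Fin 2))) ∧
    (sVal H = 1 ↔
      Nonempty (H ≃g completeGraph (Fin 3)) ∨
      Nonempty (H ≃g pathGraph 3) ∨ Nonempty (H ≃g pathGraph 4)) ∧
    (sVal H = 2 ↔
      Nonempty (H ≃g cycleGraph 4) ∨ Nonempty (H ≃g cycleGraph 5) ∨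
      Nonempty (H ≃g trianglePendant1) ∨ Nonempty (H ≃g trianglePendant2) ∨
      (H.IsTree ∧ _root_.indepNum H = 3)) := by
  exact ⟨sVal_eq_zero_iff hconn, sVal_eq_one_iff hconn, sVal_eq_two_iff hconn⟩
end
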